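/- If codewords A_t satisfy a prefix-free constraint (either unconditionally, or conditionally on every realization of (Aᵗ⁻¹, Dᵗ, Uᵗ⁻¹)), then (1/(T+1))·Σ_{t=0}^{T} E[ℓ(A_t)] ≥ (1/(T+1))·I(X^T → A^T ‖ D^T, U₊^T). -/

import Mathlib

open scoped Classical
open Finset

noncomputable def prob {Ω : Type} [Fintype Ω] (p : Ω → ℝ) (E : Ω → Prop) : ℝ :=
  ∑ ω, if E ω then p ω else 0

noncomputable def plog (q : ℝ) : ℝ := if q = 0 then 0 else -q * Real.logb 2 q

/-- Shannon entropy (in bits) of a random variable `X` on a finite space with pmf `p`. -/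
noncomputable def entropy {Ω α : Type} [Fintype Ω] (p : Ω → ℝ) (X : Ω → α) : ℝ :=
  ∑ x ∈ Finset.univ.image X, plog (prob p (fun ω => X ω = x))

/-- Conditional entropy `H(A|Z) = H(A,Z) - H(Z)` (in bits). -/
noncomputable def condEntropy {Ω α β : Type} [Fintype Ω] (p : Ω → ℝ) (A : Ω → α) (Z : Ω → β) : ℝ :=
  entropy p (fun ω => (A ω, Z ω)) - entropy p Z

/-- Mutual information `I(X;Y)` (in bits). -/
noncomputable def mutualInfo {Ω α β : Type} [Fintype Ω] (p : Ω → ℝ) (X : Ω → α) (Y : Ω → β) : ℝ :=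
  entropy p X + entropy p Y - entropy p (fun ω => (X ω, Y ω))

/-- Conditional mutual information `I(X;Y|Z) = H(X|Z) - H(X|Y,Z)` (in bits). -/
noncomputable def condMutualInfo {Ω α β γ : Type} [Fintype Ω] (p : Ω → ℝ)
    (X : Ω → α) (Y : Ω → β) (Z : Ω → γ) : ℝ :=
  condEntropy p X Z - condEntropy p X (fun ω => (Y ω, Z ω))

/-- Expected codeword length `E[ℓ(A)]`. -/
noncomputable def expLen {Ω : Type} [Fintype Ω] (p : Ω → ℝ) (A : Ω → List Bool) : ℝ :=
  ∑ ω, p ω * (A ω).length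

/-- θ(x) = x + (1+x)·log₂(1+x) − x·log₂(x); note `Real.logb 2 0 = 0`, so θ(0) = 0. -/
noncomputable def theta (x : ℝ) : ℝ :=
  x + (1 + x) * Real.logb 2 (1 + x) - x * Real.logb 2 x

/-- The inverse of θ on `[0,∞)`. -/
noncomputable def thetaInv : ℝ → ℝ := Function.invFunOn theta (Set.Ici 0)

/-- History `(X_0, …, X_{t-1})` of a discrete-time process. -/
def hist {Ω α : Type} (X : ℕ → Ω → α) (t : ℕ) (ω : Ω) : Fin t → α := fun i => X i ω

/-! Each summand is bounded separately. Dropping `Xᵗ` from the conditioning gives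
`I(Xᵗ; A_t | Z_t) ≤ H(A_t | Z_t)`, with `Z_t = (Aᵗ⁻¹, Dᵗ, Uᵗ⁻¹)`. Either constraint makes the
conditional support of `A_t` given every `z` prefix-free (a marginal support contains every
conditional one), so by Kraft's inequality the weights `2^(-ℓ a) · P(Z_t = z)` form a
sub-probability on the pairs `(a, z)`. Gibbs' inequality against the joint law of `(A_t, Z_t)`
then gives `H(A_t | Z_t) ≤ E[ℓ(A_t)]`. -/

open InformationTheory

def IsPrefixFree {α : Type*} (S : Set (List α)) : Prop :=
  S.Pairwise fun a b => ¬ a <+: b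

namespace IsPrefixFree

variable {α : Type*} {S : Set (List α)}

lemma eq_of_append_eq_append (hS : IsPrefixFree S) {w₁ w₂ l₁ l₂ : List α} (h₁ : w₁ ∈ S)
    (h₂ : w₂ ∈ S) (h : w₁ ++ l₁ = w₂ ++ l₂) : w₁ = w₂ := by
  by_contra hne
  have hw₁ : w₁ <+: w₂ ++ l₂ := h ▸ List.prefix_append w₁ l₁
  rcases List.prefix_or_prefix_of_prefix hw₁ (List.prefix_append w₂ l₂) with hp | hp
  · exact hS h₁ h₂ hne hp
  · exact hS h₂ h₁ (Ne.symm hne) hp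

lemma uniquelyDecodable (hS : IsPrefixFree S) (hnil : [] ∉ S) : UniquelyDecodable S := by
  intro L₁
  induction L₁ with
  | nil =>
    rintro (_ | ⟨w₂, L₂⟩) - h₂ h
    · rfl
    · have : w₂ = [] := (List.append_eq_nil_iff.mp h.symm).1
      exact absurd (this ▸ h₂ w₂ List.mem_cons_self) hnil
  | cons w₁ L₁ ih =>
    rintro (_ | ⟨w₂, L₂⟩) h₁ h₂ h
    · have : w₁ = [] := (List.append_eq_nil_iff.mp h).1
      exact absurd (this ▸ h₁ w₁ List.mem_cons_self) hnil
    · simp only [List.flatten_cons] at h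
      obtain rfl := hS.eq_of_append_eq_append (h₁ w₁ List.mem_cons_self)
        (h₂ w₂ List.mem_cons_self) h
      rw [ih L₂ (fun w hw => h₁ w (List.mem_cons_of_mem _ hw))
        (fun w hw => h₂ w (List.mem_cons_of_mem _ hw)) (List.append_cancel_left h)]

theorem kraft_inequality [Fintype α] [Nonempty α] {S : Finset (List α)}
    (hS : IsPrefixFree (S : Set (List α))) :
    ∑ w ∈ S, (1 / Fintype.card α : ℝ) ^ w.length ≤ 1 := by
  by_cases hnil : [] ∈ S
  · -- the empty word is a prefix of every word, so `S = {[]}`, which is not uniquely decodable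
    have : S = {[]} := Finset.eq_singleton_iff_unique_mem.mpr
      ⟨hnil, fun w hw => by_contra fun hne => hS hnil hw (Ne.symm hne) List.nil_prefix⟩
    simp [this]
  · exact kraft_mcmillan_inequality (hS.uniquelyDecodable hnil)

end IsPrefixFree

section Entropy

variable {Ω α β : Type} [Fintype Ω] {p : Ω → ℝ}

lemma prob_congr {E F : Ω → Prop} (h : ∀ ω, E ω ↔ F ω) : prob p E = prob p F := by
  simp only [prob, h]

lemma prob_nonneg (hp : ∀ ω, 0 ≤ p ω) (E : Ω → Prop) : 0 ≤ prob p E :=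
  sum_nonneg fun ω _ => by split_ifs <;> simp [hp ω]

lemma prob_mono (hp : ∀ ω, 0 ≤ p ω) {E F : Ω → Prop} (h : ∀ ω, E ω → F ω) :
    prob p E ≤ prob p F :=
  sum_le_sum fun ω _ => by
    by_cases hE : E ω
    · simp [hE, h ω hE]
    · simp only [hE, if_false]; split_ifs <;> simp [hp ω]

lemma prob_pos (hp : ∀ ω, 0 ≤ p ω) {E : Ω → Prop} {ω : Ω} (hω : p ω ≠ 0) (hE : E ω) :
    0 < prob p E := by
  have : p ω ≤ prob p E := by
    simpa [prob, hE] using single_le_sum (f := fun ω => if E ω then p ω else 0)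
      (fun ω _ => by split_ifs <;> simp [hp ω]) (mem_univ ω)
  exact (lt_of_le_of_ne (hp ω) hω.symm).trans_le this

lemma sum_mul_comp_eq_sum_prob_mul [DecidableEq α] (X : Ω → α) (c : α → ℝ) :
    ∑ ω, p ω * c (X ω) = ∑ x ∈ univ.image X, prob p (X · = x) * c x := by
  simp only [prob, sum_mul, ite_mul, zero_mul]
  rw [sum_comm]
  exact sum_congr rfl fun ω _ => by simp

lemma sum_prob_eq_one [DecidableEq α] (hsum : ∑ ω, p ω = 1) (X : Ω → α) :
    ∑ x ∈ univ.image X, prob p (X · = x) = 1 := by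
  simpa [hsum] using (sum_mul_comp_eq_sum_prob_mul (p := p) X fun _ => 1).symm

lemma sum_mul_div_prob [DecidableEq α] (X : Ω → α) (c : α → ℝ) :
    ∑ ω, p ω * (c (X ω) / prob p (X · = X ω)) =
      ∑ x ∈ univ.image X with prob p (X · = x) ≠ 0, c x := by
  rw [sum_mul_comp_eq_sum_prob_mul X fun x => c x / prob p (X · = x), sum_filter]
  exact sum_congr rfl fun x _ => by
    rcases eq_or_ne (prob p (X · = x)) 0 with h | h <;> simp [h, mul_div_cancel₀]

lemma entropy_eq_sum (X : Ω → α) :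
    entropy p X = ∑ ω, p ω * -Real.logb 2 (prob p (X · = X ω)) := by
  rw [entropy, sum_mul_comp_eq_sum_prob_mul X fun x => -Real.logb 2 (prob p (X · = x))]
  refine sum_congr rfl fun x _ => ?_
  rw [plog]
  split_ifs with h <;> simp [h]

lemma entropy_comp_le (hp : ∀ ω, 0 ≤ p ω) (f : β → α) (W : Ω → β) :
    entropy p (f ∘ W) ≤ entropy p W := by
  rw [entropy_eq_sum, entropy_eq_sum]
  refine sum_le_sum fun ω _ => ?_
  rcases eq_or_ne (p ω) 0 with hω | hω
  · simp [hω]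
  refine mul_le_mul_of_nonneg_left (neg_le_neg ?_) (hp ω)
  exact Real.logb_le_logb_of_le one_lt_two (prob_pos hp hω rfl)
    (prob_mono hp fun ω' h => congrArg f h)

lemma condMutualInfo_le_condEntropy {γ : Type} (hp : ∀ ω, 0 ≤ p ω) (X : Ω → α) (A : Ω → β)
    (Z : Ω → γ) : condMutualInfo p X A Z ≤ condEntropy p A Z := by
  have : entropy p (fun ω => (X ω, Z ω)) ≤ entropy p fun ω => (X ω, A ω, Z ω) :=
    entropy_comp_le hp (fun x : α × β × γ => (x.1, x.2.2))
      fun ω => (X ω, A ω, Z ω)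
  simp only [condMutualInfo, condEntropy]
  linarith

lemma sum_mul_logb_nonpos (hp : ∀ ω, 0 ≤ p ω) (hsum : ∑ ω, p ω = 1) {f : Ω → ℝ}
    (hf : ∀ ω, p ω ≠ 0 → 0 < f ω) (h : ∑ ω, p ω * f ω ≤ 1) :
    ∑ ω, p ω * Real.logb 2 (f ω) ≤ 0 := by
  have hlog : ∑ ω, p ω * Real.log (f ω) ≤ 0 := calc
    ∑ ω, p ω * Real.log (f ω) ≤ ∑ ω, p ω * (f ω - 1) := sum_le_sum fun ω _ => by
        rcases eq_or_ne (p ω) 0 with hω | hω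
        · simp [hω]
        · exact mul_le_mul_of_nonneg_left (Real.log_le_sub_one_of_pos (hf ω hω)) (hp ω)
    _ = ∑ ω, p ω * f ω - 1 := by simp [mul_sub, sum_sub_distrib, hsum]
    _ ≤ 0 := by linarith
  simp only [Real.logb, mul_div_assoc', ← sum_div]
  exact div_nonpos_of_nonpos_of_nonneg hlog (Real.log_nonneg one_le_two)

end Entropy

section CodeLength

variable {Ω β : Type} [Fintype Ω] {p : Ω → ℝ}

lemma prob_pair_eq_prob_and (A : Ω → List Bool) (Z : Ω → β) (a : List Bool) (z : β) :
    prob p (fun ω => (A ω, Z ω) = (a, z)) = prob p (fun ω => A ω = a ∧ Z ω = z) :=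
  prob_congr fun _ => Prod.mk_inj

lemma sum_kraft_mul_prob_le_one (hp : ∀ ω, 0 ≤ p ω) (hsum : ∑ ω, p ω = 1)
    (A : Ω → List Bool) (Z : Ω → β)
    (hpf : ∀ z, IsPrefixFree {a | 0 < prob p (fun ω => A ω = a ∧ Z ω = z)}) :
    ∑ x ∈ univ.image (fun ω => (A ω, Z ω)) with prob p (fun ω => (A ω, Z ω) = x) ≠ 0,
      (1 / 2 : ℝ) ^ x.1.length * prob p (Z · = x.2) ≤ 1 := by
  set S := {x ∈ univ.image (fun ω => (A ω, Z ω)) | prob p (fun ω => (A ω, Z ω) = x) ≠ 0}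
  have hfiber (z : β) : ∑ x ∈ S with x.2 = z, (1 / 2 : ℝ) ^ x.1.length ≤ 1 := by
    have hinj : Set.InjOn Prod.fst (S.filter (·.2 = z) : Set (List Bool × β)) :=
      fun x hx y hy h => Prod.ext h (((mem_filter.1 hx).2).trans (mem_filter.1 hy).2.symm)
    have hpf' :
        IsPrefixFree (((S.filter (·.2 = z)).image Prod.fst : Finset _) : Set (List Bool)) :=
      (hpf z).mono fun a ha => by
        obtain ⟨x, hx, rfl⟩ := Finset.mem_image.1 ha
        obtain ⟨hxS, rfl⟩ := mem_filter.1 hx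
        rw [Set.mem_ofPred_eq, ← prob_pair_eq_prob_and]
        exact lt_of_le_of_ne (prob_nonneg hp _) (mem_filter.1 hxS).2.symm
    rw [← sum_image (g := Prod.fst) (f := fun a => (1 / 2 : ℝ) ^ a.length) hinj]
    simpa using hpf'.kraft_inequality
  calc ∑ x ∈ S, (1 / 2 : ℝ) ^ x.1.length * prob p (Z · = x.2)
      = ∑ z ∈ univ.image Z, ∑ x ∈ S with x.2 = z,
          (1 / 2 : ℝ) ^ x.1.length * prob p (Z · = x.2) := by
        refine (sum_fiberwise_of_maps_to (fun x hx => ?_) _).symm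
        obtain ⟨ω, -, rfl⟩ := Finset.mem_image.1 (mem_filter.1 hx).1
        exact mem_image_of_mem Z (mem_univ ω)
    _ = ∑ z ∈ univ.image Z,
          prob p (Z · = z) * ∑ x ∈ S with x.2 = z, (1 / 2 : ℝ) ^ x.1.length :=
        sum_congr rfl fun z _ => by
          rw [mul_sum]
          exact sum_congr rfl fun x hx => by rw [(mem_filter.1 hx).2, mul_comm]
    _ ≤ ∑ z ∈ univ.image Z, prob p (Z · = z) :=
        sum_le_sum fun z _ => mul_le_of_le_one_right (prob_nonneg hp _) (hfiber z)
    _ = 1 := sum_prob_eq_one hsum Z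

theorem condEntropy_le_expLen (hp : ∀ ω, 0 ≤ p ω) (hsum : ∑ ω, p ω = 1)
    (A : Ω → List Bool) (Z : Ω → β)
    (hpf : ∀ z, IsPrefixFree {a | 0 < prob p (fun ω => A ω = a ∧ Z ω = z)}) :
    condEntropy p A Z ≤ expLen p A := by
  set q : Ω → ℝ := fun ω => (1 / 2 : ℝ) ^ (A ω).length * prob p (Z · = Z ω) /
    prob p (fun ω' => (A ω', Z ω') = (A ω, Z ω))
  have hq_pos (ω : Ω) (hω : p ω ≠ 0) : 0 < q ω :=
    div_pos (mul_pos (by positivity) (prob_pos hp hω rfl)) (prob_pos hp hω rfl)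
  have hq_sum : ∑ ω, p ω * q ω ≤ 1 := by
    simpa only [q, mul_div_assoc] using
      (sum_mul_div_prob (p := p) (fun ω => (A ω, Z ω))
        fun x => (1 / 2 : ℝ) ^ x.1.length * prob p (Z · = x.2)).trans_le
      (sum_kraft_mul_prob_le_one hp hsum A Z hpf)
  have hdiff : condEntropy p A Z - expLen p A = ∑ ω, p ω * Real.logb 2 (q ω) := by
    rw [condEntropy, entropy_eq_sum, entropy_eq_sum, expLen, ← sum_sub_distrib,
      ← sum_sub_distrib]
    refine sum_congr rfl fun ω _ => ?_
    rcases eq_or_ne (p ω) 0 with hω | hω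
    · simp [hω]
    have hlen : (0 : ℝ) < (1 / 2) ^ (A ω).length := by positivity
    have hZ : 0 < prob p (Z · = Z ω) := prob_pos hp hω rfl
    have hAZ : 0 < prob p (fun ω' => (A ω', Z ω') = (A ω, Z ω)) := prob_pos hp hω rfl
    rw [Real.logb_div (mul_pos hlen hZ).ne' hAZ.ne', Real.logb_mul hlen.ne' hZ.ne',
      Real.logb_pow, one_div, Real.logb_inv, Real.logb_self_eq_one one_lt_two]
    ring
  linarith [sum_mul_logb_nonpos hp hsum hq_pos hq_sum]

end CodeLength

/-- Lemma 1 of the paper: prefix-free codewords (under either constraint) are lower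
bounded in average length by the causally conditioned directed information. -/
theorem prefixFree_rate_lower_bound {Ω α γ δ : Type} [Fintype Ω]
    (p : Ω → ℝ) (hp : ∀ ω, 0 ≤ p ω) (hsum : ∑ ω, p ω = 1) (T : ℕ)
    (X : ℕ → Ω → α) (A : ℕ → Ω → List Bool) (D : ℕ → Ω → γ) (U : ℕ → Ω → δ)
    (hpf : ∀ t ≤ T,
      (∀ a₁ a₂ : List Bool, 0 < prob p (fun ω => A t ω = a₁) →
        0 < prob p (fun ω => A t ω = a₂) → a₁ ≠ a₂ → ¬ a₁ <+: a₂) ∨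
      (∀ (z : (Fin t → List Bool) × (Fin (t + 1) → γ) × (Fin t → δ)),
        ∀ a₁ a₂ : List Bool,
          0 < prob p (fun ω => A t ω = a₁ ∧ (hist A t ω, hist D (t + 1) ω, hist U t ω) = z) →
          0 < prob p (fun ω => A t ω = a₂ ∧ (hist A t ω, hist D (t + 1) ω, hist U t ω) = z) →
          a₁ ≠ a₂ → ¬ a₁ <+: a₂)) :
    (1 / (T + 1 : ℝ)) * ∑ t ∈ Finset.range (T + 1), expLen p (A t) ≥
      (1 / (T + 1 : ℝ)) * ∑ t ∈ Finset.range (T + 1),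
        condMutualInfo p (hist X (t + 1)) (A t)
          (fun ω => (hist A t ω, hist D (t + 1) ω, hist U t ω)) := by
  refine mul_le_mul_of_nonneg_left (sum_le_sum fun t ht => ?_) (by positivity)
  set Z := fun ω => (hist A t ω, hist D (t + 1) ω, hist U t ω)
  have hpf_cond : ∀ z, IsPrefixFree {a | 0 < prob p (fun ω => A t ω = a ∧ Z ω = z)} := by
    rcases hpf t (Nat.lt_succ_iff.mp (mem_range.mp ht)) with hmarg | hcond
    · have hsupp (a : List Bool) (z) :
          prob p (fun ω => A t ω = a ∧ Z ω = z) ≤ prob p (fun ω => A t ω = a) :=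
        prob_mono hp fun _ h => h.1
      exact fun z a₁ h₁ a₂ h₂ =>
        hmarg a₁ a₂ (h₁.trans_le (hsupp a₁ z)) (h₂.trans_le (hsupp a₂ z))
    · exact fun z a₁ h₁ a₂ h₂ => hcond z a₁ a₂ h₁ h₂
  exact (condMutualInfo_le_condEntropy hp _ _ _).trans
    (condEntropy_le_expLen hp hsum _ _ hpf_cond)
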